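/- arXiv:2401.12565 — 2 statements merged into one kernel-verified Lean document; each statement's English description precedes it below -/
import Mathlib

section
/- Let $a, b, f, g : \mathbb{R} \to \mathbb{R}$ be real analytic functions with $a g - b f$ not identically zero and $a^2 + b^2$ nowhere zero. Then there exists $\lambda \in (0, \infty)$ such that the function $t \mapsto (a(t) + \lambda f(t))^2 + (b(t) + \lambda g(t))^2$ has no zeros on $\mathbb{R}$. -/
open Topology Filter


theorem exists_lambda_no_zero (a b f g : ℝ → ℝ)
    (ha : AnalyticOnNhd ℝ a Set.univ) (hb : AnalyticOnNhd ℝ b Set.univ)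
    (hf : AnalyticOnNhd ℝ f Set.univ) (hg : AnalyticOnNhd ℝ g Set.univ)
    (hdet : ∃ t, a t * g t - b t * f t ≠ 0)
    (hab : ∀ t, a t ^ 2 + b t ^ 2 ≠ 0) :
    ∃ l : ℝ, 0 < l ∧ ∀ t, (a t + l * f t) ^ 2 + (b t + l * g t) ^ 2 ≠ 0 := by
  set D : ℝ → ℝ := fun t => a t * g t - b t * f t with hDdef
  have hDan : AnalyticOnNhd ℝ D Set.univ := fun x hx =>
    ((ha x hx).mul (hg x hx)).sub ((hb x hx).mul (hf x hx))
  set Z : Set ℝ := {t | D t = 0} with hZdef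
  -- every point of Z is isolated in Z
  have hiso : ∀ x ∈ Z, 𝓝[Z \ {x}] x = ⊥ := by
    intro x hx
    rcases (hDan x trivial).eventually_eq_zero_or_eventually_ne_zero with h | h
    · exfalso
      obtain ⟨t, ht⟩ := hdet
      have heq : Set.EqOn D 0 Set.univ :=
        hDan.eqOn_zero_of_preconnected_of_eventuallyEq_zero isPreconnected_univ trivial h
      exact ht (heq (Set.mem_univ t))
    · rw [← Filter.eventually_false_iff_eq_bot]
      have h1 : ∀ᶠ z in 𝓝[Z \ {x}] x, D z = 0 :=
        Filter.eventually_iff_exists_mem.2 ⟨Z \ {x}, self_mem_nhdsWithin, fun z hz => hz.1⟩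
      have h2 : ∀ᶠ z in 𝓝[Z \ {x}] x, D z ≠ 0 :=
        (h.filter_mono (nhdsWithin_mono x (fun z hz => hz.2)))
      filter_upwards [h1, h2] with z hz1 hz2 using hz2 hz1
  have hdisc : DiscreteTopology ↥Z := by
    rw [discreteTopology_subtype_iff]
    intro x hx
    rw [nhdsWithin, inf_assoc, inf_principal, Set.inter_comm, ← Set.diff_eq,
      ← nhdsWithin]
    exact hiso x hx
  have hZcount : Z.Countable := by
    rw [← Set.countable_coe_iff]
    exact TopologicalSpace.separableSpace_iff_countable.mp inferInstance
  -- the "bad" lambda associated to each zero of D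
  set m : ℝ → ℝ := fun t => if f t ≠ 0 then -a t / f t else -b t / g t with hmdef
  set B : Set ℝ := m '' Z with hBdef
  have hBcount : B.Countable := hZcount.image m
  -- key: if both linear equations hold at t for some l, then t ∈ Z and l = m t
  have key : ∀ l t, a t + l * f t = 0 → b t + l * g t = 0 → t ∈ Z ∧ l = m t := by
    intro l t h1 h2
    have hat : a t = -(l * f t) := by linarith
    have hbt : b t = -(l * g t) := by linarith
    have htZ : t ∈ Z := by
      simp only [hZdef, Set.mem_setOf_eq, hDdef]
      rw [hat, hbt]; ring
    refine ⟨htZ, ?_⟩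
    by_cases hft : f t ≠ 0
    · simp only [hmdef, if_pos hft]
      field_simp
      linarith
    · push_neg at hft
      have hgt : g t ≠ 0 := by
        intro hg0
        apply hab t
        rw [hat, hbt, hft, hg0]; ring
      simp only [hmdef]
      rw [if_neg (not_not.mpr hft)]
      field_simp
      linarith
  -- choose a positive lambda outside B
  have hexists : ∃ l : ℝ, 0 < l ∧ l ∉ B := by
    by_contra hcon
    push_neg at hcon
    have hsub : (Set.univ : Set ℝ) ⊆ Real.exp ⁻¹' B := by
      intro x _
      exact hcon (Real.exp x) (Real.exp_pos x)
    exact Cardinal.not_countable_real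
      ((hBcount.preimage Real.exp_injective).mono hsub)
  obtain ⟨l, hl, hlB⟩ := hexists
  refine ⟨l, hl, fun t hzero => ?_⟩
  have h1 : a t + l * f t = 0 ∧ b t + l * g t = 0 := by
    constructor <;> nlinarith [sq_nonneg (a t + l * f t), sq_nonneg (b t + l * g t)]
  obtain ⟨htZ, hlm⟩ := key l t h1.1 h1.2
  exact hlB ⟨t, htZ, hlm.symm⟩
end

section
/- Let $a, b : \mathbb{R} \to \mathbb{R}$ be real analytic functions such that $a b$ is not identically zero, and at every point $t$ where $a(t)b(t) = 0$ and $a(t)^2 - b(t)^2 \ne 0$, record the value $-1/(a(t)^2 - b(t)^2)$. Then for every $\lambda \in \mathbb{R}$ avoiding the countable set of recorded values, the complex-valued function $t \mapsto 1 + \lambda (a(t)+ib(t))^2$ is nowhere zero on $\mathbb{R}$. -/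
open Complex in
theorem nowhere_zero_of_avoid_recorded (a b : ℝ → ℝ)
    (ha : AnalyticOnNhd ℝ a Set.univ) (hb : AnalyticOnNhd ℝ b Set.univ)
    (hab : ∃ t, a t * b t ≠ 0) (l : ℝ)
    (hl : l ∉ {x : ℝ | ∃ t, a t * b t = 0 ∧ a t ^ 2 - b t ^ 2 ≠ 0 ∧
      x = -1 / (a t ^ 2 - b t ^ 2)}) :
    ∀ t, (1 : ℂ) + (l : ℂ) * ((a t : ℂ) + (b t : ℂ) * Complex.I) ^ 2 ≠ 0 := by
  intro t h
  simp only [Set.mem_setOf_eq, not_exists] at hl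
  have h' : ((1 + l * (a t ^ 2 - b t ^ 2) : ℝ) : ℂ) + ((l * (2 * (a t * b t)) : ℝ) : ℂ) * Complex.I = 0 := by
    push_cast
    linear_combination h - (l:ℂ)*(b t:ℂ)^2*Complex.I_sq
  rw [Complex.ext_iff] at h'
  simp only [Complex.add_re, Complex.add_im, Complex.ofReal_re, Complex.ofReal_im,
    Complex.mul_re, Complex.mul_im, Complex.I_re, Complex.I_im, Complex.zero_re,
    Complex.zero_im, mul_zero, mul_one, zero_mul, sub_zero, zero_add, add_zero] at h'
  obtain ⟨h1, h2⟩ := h'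
  rcases eq_or_ne l 0 with rfl | hl0
  · simp at h1
  · have hab0 : a t * b t = 0 := by
      rcases mul_eq_zero.mp h2 with h | h
      · exact absurd h hl0
      · linarith
    have hd : a t ^ 2 - b t ^ 2 ≠ 0 := by
      intro hz
      rw [hz] at h1
      simp at h1
    exact hl t ⟨hab0, hd, by field_simp; linarith⟩
end
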